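/- (Forward Darboux transformation, Section 3.2) Let (Ω, d, d̄) be a bidifferential calculus with A = Ω^0. Let A₀ be an m×m matrix over Ω^1 with d A₀ = 0 and d̄ A₀ − A₀A₀ = 0. Let Δ_θ be an m×m matrix over A and λ_θ an m×m matrix over Ω^1 with d̄Δ_θ + [λ_θ,Δ_θ] = (dΔ_θ)Δ_θ and d̄λ_θ + λ_θ² = (dλ_θ)Δ_θ, and let θ be an invertible m×m matrix over A with d̄θ = A₀θ + (dθ)Δ_θ + θλ_θ. Set σ_{[+1]} := θ Δ_θ θ^{-1} and A_{[+1]} := A₀ + d σ_{[+1]}. Then: (i) d A_{[+1]} = 0 and d̄ A_{[+1]} − A_{[+1]}A_{[+1]} = 0; (ii) if Δ_ψ, λ_ψ (sizes n×n over A and Ω^1) satisfy d̄Δ_ψ + [λ_ψ,Δ_ψ] = (dΔ_ψ)Δ_ψ and d̄λ_ψ + λ_ψ² = (dλ_ψ)Δ_ψ, and ψ is an m×n matrix over A with d̄ψ = A₀ψ + (dψ)Δ_ψ + ψλ_ψ, then ψ_{[+1]} := σ_{[+1]}ψ − ψΔ_ψ satisfies d̄ψ_{[+1]} = A_{[+1]}ψ_{[+1]}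 + (dψ_{[+1]})Δ_ψ + ψ_{[+1]}λ_ψ. -/

import Mathlib

/-- A bidifferential calculus: a unital graded associative algebra
`Ω = ⊕_{r≥0} Ω^r` over a field `𝕂`, together with two `𝕂`-linear graded
derivations `d`, `dbar` of degree one satisfying `d² = d̄² = d d̄ + d̄ d = 0`. -/
structure BidiffCalculus (𝕂 : Type) [Field 𝕂] (Ω : Type) [Ring Ω] [Algebra 𝕂 Ω] where
  grade : ℕ → Submodule 𝕂 Ω
  internal : DirectSum.IsInternal grade
  one_mem : (1 : Ω) ∈ grade 0
  mul_mem : ∀ (r s : ℕ), ∀ a ∈ grade r, ∀ b ∈ grade s, a * b ∈ grade (r + s)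
  d : Ω →ₗ[𝕂] Ω
  dbar : Ω →ₗ[𝕂] Ω
  d_grade : ∀ (r : ℕ), ∀ a ∈ grade r, d a ∈ grade (r + 1)
  dbar_grade : ∀ (r : ℕ), ∀ a ∈ grade r, dbar a ∈ grade (r + 1)
  d_leibniz : ∀ (r : ℕ), ∀ a ∈ grade r, ∀ b : Ω,
      d (a * b) = d a * b + ((-1 : ℤ) ^ r) • (a * d b)
  dbar_leibniz : ∀ (r : ℕ), ∀ a ∈ grade r, ∀ b : Ω,
      dbar (a * b) = dbar a * b + ((-1 : ℤ) ^ r) • (a * dbar b)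
  d_d : ∀ a : Ω, d (d a) = 0
  dbar_dbar : ∀ a : Ω, dbar (dbar a) = 0
  d_dbar_anticomm : ∀ a : Ω, d (dbar a) + dbar (d a) = 0

namespace BidiffCalculus

variable {𝕂 : Type} [Field 𝕂] {Ω : Type} [Ring Ω] [Algebra 𝕂 Ω]

/-- Entrywise action of `d` on matrices over `Ω`. -/
def matD (S : BidiffCalculus 𝕂 Ω) {m n : ℕ} (M : Matrix (Fin m) (Fin n) Ω) :
    Matrix (Fin m) (Fin n) Ω := M.map S.d

/-- Entrywise action of `dbar` on matrices over `Ω`. -/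
def matDbar (S : BidiffCalculus 𝕂 Ω) {m n : ℕ} (M : Matrix (Fin m) (Fin n) Ω) :
    Matrix (Fin m) (Fin n) Ω := M.map S.dbar

/-- A matrix has all entries of degree `r`. -/
def MatIn (S : BidiffCalculus 𝕂 Ω) (r : ℕ) {m n : ℕ} (M : Matrix (Fin m) (Fin n) Ω) : Prop :=
  ∀ i j, M i j ∈ S.grade r

end BidiffCalculus

namespace BidiffCalculus

variable {𝕂 : Type} [Field 𝕂] {Ω : Type} [Ring Ω] [Algebra 𝕂 Ω]

variable (S : BidiffCalculus 𝕂 Ω)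

lemma d_one : S.d 1 = 0 := by
  have h := S.d_leibniz 0 1 S.one_mem 1
  simp only [mul_one, one_mul, pow_zero, one_smul] at h
  exact (right_eq_add.mp h)

lemma dbar_one : S.dbar 1 = 0 := by
  have h := S.dbar_leibniz 0 1 S.one_mem 1
  simp only [mul_one, one_mul, pow_zero, one_smul] at h
  exact (right_eq_add.mp h)

lemma matD_one {m : ℕ} : S.matD (1 : Matrix (Fin m) (Fin m) Ω) = 0 := by
  ext i j
  by_cases h : i = j <;> simp [matD, Matrix.one_apply, h, d_one]

lemma matDbar_one {m : ℕ} : S.matDbar (1 : Matrix (Fin m) (Fin m) Ω) = 0 := by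
  ext i j
  by_cases h : i = j <;> simp [matDbar, Matrix.one_apply, h, dbar_one]

lemma matD_mul₀ {m n p : ℕ} (M : Matrix (Fin m) (Fin n) Ω) (N : Matrix (Fin n) (Fin p) Ω)
    (hM : S.MatIn 0 M) :
    S.matD (M * N) = S.matD M * N + M * S.matD N := by
  ext i j
  simp only [matD, Matrix.map_apply, Matrix.mul_apply, Matrix.add_apply, map_sum,
    ← Finset.sum_add_distrib]
  refine Finset.sum_congr rfl fun k _ => ?_
  have h := S.d_leibniz 0 (M i k) (hM i k) (N k j)
  simpa using h

lemma matDbar_mul₀ {m n p : ℕ} (M : Matrix (Fin m) (Fin n) Ω) (N : Matrix (Fin n) (Fin p) Ω)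
    (hM : S.MatIn 0 M) :
    S.matDbar (M * N) = S.matDbar M * N + M * S.matDbar N := by
  ext i j
  simp only [matDbar, Matrix.map_apply, Matrix.mul_apply, Matrix.add_apply, map_sum,
    ← Finset.sum_add_distrib]
  refine Finset.sum_congr rfl fun k _ => ?_
  have h := S.dbar_leibniz 0 (M i k) (hM i k) (N k j)
  simpa using h

lemma matD_mul₁ {m n p : ℕ} (M : Matrix (Fin m) (Fin n) Ω) (N : Matrix (Fin n) (Fin p) Ω)
    (hM : S.MatIn 1 M) :
    S.matD (M * N) = S.matD M * N - M * S.matD N := by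
  ext i j
  simp only [matD, Matrix.map_apply, Matrix.mul_apply, Matrix.sub_apply, map_sum,
    ← Finset.sum_sub_distrib]
  refine Finset.sum_congr rfl fun k _ => ?_
  have h := S.d_leibniz 1 (M i k) (hM i k) (N k j)
  simpa [sub_eq_add_neg] using h

lemma matD_matD {m n : ℕ} (M : Matrix (Fin m) (Fin n) Ω) : S.matD (S.matD M) = 0 := by
  ext i j; simp [matD, S.d_d]

lemma matDbar_matD {m n : ℕ} (M : Matrix (Fin m) (Fin n) Ω) :
    S.matDbar (S.matD M) = - S.matD (S.matDbar M) := by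
  ext i j
  have h := S.d_dbar_anticomm (M i j)
  simp only [matD, matDbar, Matrix.map_apply, Matrix.neg_apply]
  exact eq_neg_of_add_eq_zero_right h

lemma matD_inv {m : ℕ} (θ : (Matrix (Fin m) (Fin m) Ω)ˣ) (h : S.MatIn 0 (Units.val θ)) :
    S.matD (Units.val θ⁻¹) = -(Units.val θ⁻¹ * S.matD (Units.val θ) * Units.val θ⁻¹) := by
  have h1 : S.matD (Units.val θ * Units.val θ⁻¹) = 0 := by
    rw [Units.mul_inv, matD_one]
  rw [matD_mul₀ S _ _ h] at h1
  have h2 : Units.val θ * S.matD (Units.val θ⁻¹) = -(S.matD (Units.val θ) * Units.val θ⁻¹) :=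
    eq_neg_of_add_eq_zero_right h1
  calc S.matD (Units.val θ⁻¹)
      = Units.val θ⁻¹ * (Units.val θ * S.matD (Units.val θ⁻¹)) := by
        rw [← mul_assoc, Units.inv_mul, one_mul]
    _ = -(Units.val θ⁻¹ * S.matD (Units.val θ) * Units.val θ⁻¹) := by
        rw [h2]; noncomm_ring

lemma matDbar_inv {m : ℕ} (θ : (Matrix (Fin m) (Fin m) Ω)ˣ) (h : S.MatIn 0 (Units.val θ)) :
    S.matDbar (Units.val θ⁻¹) = -(Units.val θ⁻¹ * S.matDbar (Units.val θ) * Units.val θ⁻¹) := by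
  have h1 : S.matDbar (Units.val θ * Units.val θ⁻¹) = 0 := by
    rw [Units.mul_inv, matDbar_one]
  rw [matDbar_mul₀ S _ _ h] at h1
  have h2 : Units.val θ * S.matDbar (Units.val θ⁻¹) = -(S.matDbar (Units.val θ) * Units.val θ⁻¹) :=
    eq_neg_of_add_eq_zero_right h1
  calc S.matDbar (Units.val θ⁻¹)
      = Units.val θ⁻¹ * (Units.val θ * S.matDbar (Units.val θ⁻¹)) := by
        rw [← mul_assoc, Units.inv_mul, one_mul]
    _ = -(Units.val θ⁻¹ * S.matDbar (Units.val θ) * Units.val θ⁻¹) := by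
        rw [h2]; noncomm_ring

lemma MatIn_mul {r s m n p : ℕ} {M : Matrix (Fin m) (Fin n) Ω} {N : Matrix (Fin n) (Fin p) Ω}
    (hM : S.MatIn r M) (hN : S.MatIn s N) : S.MatIn (r + s) (M * N) := fun i j => by
  simp only [Matrix.mul_apply]
  exact Submodule.sum_mem _ fun k _ => S.mul_mem r s _ (hM i k) _ (hN k j)

lemma MatIn_matD {r m n : ℕ} {M : Matrix (Fin m) (Fin n) Ω} (hM : S.MatIn r M) :
    S.MatIn (r + 1) (S.matD M) := fun i j => S.d_grade r _ (hM i j)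

lemma matD_add {m n : ℕ} (M N : Matrix (Fin m) (Fin n) Ω) :
    S.matD (M + N) = S.matD M + S.matD N := by ext i j; simp [matD]

lemma matD_sub {m n : ℕ} (M N : Matrix (Fin m) (Fin n) Ω) :
    S.matD (M - N) = S.matD M - S.matD N := by ext i j; simp [matD]

lemma matDbar_add {m n : ℕ} (M N : Matrix (Fin m) (Fin n) Ω) :
    S.matDbar (M + N) = S.matDbar M + S.matDbar N := by ext i j; simp [matDbar]

lemma matDbar_sub {m n : ℕ} (M N : Matrix (Fin m) (Fin n) Ω) :
    S.matDbar (M - N) = S.matDbar M - S.matDbar N := by ext i j; simp [matDbar]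


end BidiffCalculus

/-- `Φ_{i,j} = θ Δ^i Ω̂^{-1} Γ^j η`, with negative powers given by powers of inverses. -/
def Phi {R : Type} [Ring R] {m n : ℕ} (θ : Matrix (Fin m) (Fin n) R)
    (η : Matrix (Fin n) (Fin m) R) (Δ Γ W : (Matrix (Fin n) (Fin n) R)ˣ) (i j : ℤ) :
    Matrix (Fin m) (Fin m) R :=
  θ * Units.val (Δ ^ i) * Units.val W⁻¹ * Units.val (Γ ^ j) * η

open BidiffCalculus in
set_option maxHeartbeats 1600000 in
/-- forward Darboux transformation, Section 3.2. -/
theorem forward_darboux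
    {𝕂 : Type} [Field 𝕂] [CharZero 𝕂] {Ω : Type} [Ring Ω] [Algebra 𝕂 Ω]
    (S : BidiffCalculus 𝕂 Ω) {m n : ℕ}
    (A₀ : Matrix (Fin m) (Fin m) Ω) (hA₀1 : S.MatIn 1 A₀)
    (hdA₀ : S.matD A₀ = 0) (hF : S.matDbar A₀ - A₀ * A₀ = 0)
    (Δθ lamθ : Matrix (Fin m) (Fin m) Ω) (hΔθ0 : S.MatIn 0 Δθ) (hlamθ1 : S.MatIn 1 lamθ)
    (heqΔθ : S.matDbar Δθ + (lamθ * Δθ - Δθ * lamθ) = S.matD Δθ * Δθ)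
    (heqlamθ : S.matDbar lamθ + lamθ * lamθ = S.matD lamθ * Δθ)
    (θ : (Matrix (Fin m) (Fin m) Ω)ˣ)
    (hθ0 : S.MatIn 0 (Units.val θ)) (hθinv0 : S.MatIn 0 (Units.val θ⁻¹))
    (hlinθ : S.matDbar (Units.val θ)
        = A₀ * Units.val θ + S.matD (Units.val θ) * Δθ + Units.val θ * lamθ)
    (Δψ lamψ : Matrix (Fin n) (Fin n) Ω) (hΔψ0 : S.MatIn 0 Δψ) (hlamψ1 : S.MatIn 1 lamψ)
    (heqΔψ : S.matDbar Δψ + (lamψ * Δψ - Δψ * lamψ) = S.matD Δψ * Δψ)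
    (heqlamψ : S.matDbar lamψ + lamψ * lamψ = S.matD lamψ * Δψ)
    (ψ : Matrix (Fin m) (Fin n) Ω) (hψ0 : S.MatIn 0 ψ)
    (hlinψ : S.matDbar ψ = A₀ * ψ + S.matD ψ * Δψ + ψ * lamψ) :
    let σ := Units.val θ * Δθ * Units.val θ⁻¹
    let Anew := A₀ + S.matD σ
    let ψnew := σ * ψ - ψ * Δψ
    S.matD Anew = 0 ∧ S.matDbar Anew - Anew * Anew = 0 ∧
      S.matDbar ψnew = Anew * ψnew + S.matD ψnew * Δψ + ψnew * lamψ := by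
  intro σ Anew ψnew
  -- basic degree facts
  have hθΔ0 : S.MatIn 0 (Units.val θ * Δθ) := S.MatIn_mul hθ0 hΔθ0
  have hσ0 : S.MatIn 0 σ := S.MatIn_mul hθΔ0 hθinv0
  have hdσ1 : S.MatIn 1 (S.matD σ) := S.MatIn_matD hσ0
  -- rewritten hypotheses
  have hbA₀ : S.matDbar A₀ = A₀ * A₀ := sub_eq_zero.mp hF
  have hbΔθ : S.matDbar Δθ = S.matD Δθ * Δθ - (lamθ * Δθ - Δθ * lamθ) := eq_sub_of_add_eq heqΔθ
  have hbΔψ : S.matDbar Δψ = S.matD Δψ * Δψ - (lamψ * Δψ - Δψ * lamψ) := eq_sub_of_add_eq heqΔψ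
  -- the derivative of σ
  have hdσ : S.matD σ = S.matD (Units.val θ) * Δθ * Units.val θ⁻¹
      + Units.val θ * S.matD Δθ * Units.val θ⁻¹
      - Units.val θ * Δθ * Units.val θ⁻¹ * S.matD (Units.val θ) * Units.val θ⁻¹ := by
    show S.matD (Units.val θ * Δθ * Units.val θ⁻¹) = _
    rw [S.matD_mul₀ _ _ hθΔ0, S.matD_mul₀ _ _ hθ0, S.matD_inv θ hθ0]
    noncomm_ring
  -- key relation (★): d̄σ = [A₀, σ] + (dσ)σ
  have hbσ : S.matDbar σ = A₀ * σ - σ * A₀ + S.matD σ * σ := by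
    have e1 : S.matDbar σ = (S.matDbar (Units.val θ) * Δθ + Units.val θ * S.matDbar Δθ)
        * Units.val θ⁻¹ + Units.val θ * Δθ * S.matDbar (Units.val θ⁻¹) := by
      show S.matDbar (Units.val θ * Δθ * Units.val θ⁻¹) = _
      rw [S.matDbar_mul₀ _ _ hθΔ0, S.matDbar_mul₀ _ _ hθ0]
    rw [e1, S.matDbar_inv θ hθ0, hlinθ, hbΔθ, hdσ,
      show σ = Units.val θ * Δθ * Units.val θ⁻¹ from rfl]
    simp only [Matrix.mul_add, Matrix.add_mul, Matrix.mul_sub, Matrix.sub_mul, Matrix.mul_assoc,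
      Matrix.neg_mul, Matrix.mul_neg, Units.inv_mul_cancel_left, Units.mul_inv_cancel_left,
      Units.mul_inv, Units.inv_mul, Matrix.mul_one, Matrix.one_mul]
    abel
  -- consequence: d̄(dσ) = A₀ dσ + dσ A₀ + dσ dσ
  have hbdσ : S.matDbar (S.matD σ) = A₀ * S.matD σ + S.matD σ * A₀ + S.matD σ * S.matD σ := by
    rw [S.matDbar_matD, hbσ, S.matD_add, S.matD_sub, S.matD_mul₁ _ _ hA₀1,
      S.matD_mul₀ _ _ hσ0, S.matD_mul₁ _ _ hdσ1, hdA₀, S.matD_matD]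
    noncomm_ring
  refine ⟨?_, ?_, ?_⟩
  · show S.matD (A₀ + S.matD σ) = 0
    rw [S.matD_add, hdA₀, S.matD_matD, add_zero]
  · show S.matDbar (A₀ + S.matD σ) - (A₀ + S.matD σ) * (A₀ + S.matD σ) = 0
    rw [S.matDbar_add, hbA₀, hbdσ]
    noncomm_ring
  · show S.matDbar (σ * ψ - ψ * Δψ)
      = (A₀ + S.matD σ) * (σ * ψ - ψ * Δψ) + S.matD (σ * ψ - ψ * Δψ) * Δψ
        + (σ * ψ - ψ * Δψ) * lamψ
    rw [S.matDbar_sub, S.matDbar_mul₀ _ _ hσ0, S.matDbar_mul₀ _ _ hψ0,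
      S.matD_sub, S.matD_mul₀ _ _ hσ0, S.matD_mul₀ _ _ hψ0, hbσ, hlinψ, hbΔψ]
    simp only [Matrix.mul_add, Matrix.add_mul, Matrix.mul_sub, Matrix.sub_mul, Matrix.mul_assoc]
    abel
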